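/- Let f : ℝ^d → ℝ^d satisfy |f(z) − f(z')| ≤ L̂_f (1 + |z|^q + |z'|^q)|z − z'| for some L̂_f, q > 0; let u satisfy |u(x, μ) − u(x', μ)| ≤ L̂_u (1 + |x|^q + |x'|^q)|x − x'| for every probability measure μ and be Lipschitz along empirical measures with constant L_ũ ≥ 0. Then with C := max{9 L̂_u², 3 L_ũ, 9 L̂_f²}, for every N ≥ 1, all x, x' ∈ ℝ^d and all a, a' ∈ (ℝ^d)^N: |v(x, μ^a) − v(x', μ^{a'})|² ≤ C [ (1 + |x|^{2q} + |x'|^{2q}) |x − x'|² + (1/N) ∑_{j=1}^N |a_j − a'_j|² + (1/N) ∑_{j=1}^N (1 + |x − a_j|^{2q} + |x' − a'_j|^{2q}) |(x − a_j) − (x' − a'_j)|² ]. -/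

import Mathlib

/-!
Write `v(x, μ^a) − v(x', μ^{a'})` as the change of measure `u(x, μ^a) − u(x, μ^{a'})`, the
change of point `u(x, μ^{a'}) − u(x', μ^{a'})` and the average of `f(x − a_j) − f(x' − a'_j)`.
Then `‖A + B + C‖² ≤ 3 (‖A‖² + ‖B‖² + ‖C‖²)`, Jensen bounds the square of the average by the
average of the squares, and squaring each weighted Lipschitz bound costs another factor `3`.
-/

open RealInnerProductSpace MeasureTheory

/-- The empirical measure `μ^a := (1/N) ∑_{j=1}^N δ_{a_j}` of an `N`-tuple of points. -/
noncomputable def empMeas {d N : ℕ} (a : Fin N → EuclideanSpace ℝ (Fin d)) :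
    Measure (EuclideanSpace ℝ (Fin d)) :=
  (N : ENNReal)⁻¹ • ∑ j, Measure.dirac (a j)

/-- The interaction drift `v` evaluated along an empirical measure:
`v(x, μ^a) = u(x, μ^a) + (1/N) ∑_j f(x − a_j)`. -/
noncomputable def vEmp {d N : ℕ}
    (f : EuclideanSpace ℝ (Fin d) → EuclideanSpace ℝ (Fin d))
    (u : EuclideanSpace ℝ (Fin d) → Measure (EuclideanSpace ℝ (Fin d)) →
      EuclideanSpace ℝ (Fin d))
    (x : EuclideanSpace ℝ (Fin d)) (a : Fin N → EuclideanSpace ℝ (Fin d)) :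
    EuclideanSpace ℝ (Fin d) :=
  u x (empMeas a) + (N : ℝ)⁻¹ • ∑ j, f (x - a j)

lemma isProbabilityMeasure_empMeas {d N : ℕ} (hN : N ≠ 0)
    (a : Fin N → EuclideanSpace ℝ (Fin d)) : IsProbabilityMeasure (empMeas a) := by
  constructor
  simp only [empMeas, Measure.smul_apply, Measure.finsetSum_apply, measure_univ,
    Finset.sum_const, Finset.card_univ, Fintype.card_fin, nsmul_eq_mul, mul_one, smul_eq_mul]
  exact ENNReal.inv_mul_cancel (by exact_mod_cast hN) (ENNReal.natCast_ne_top N)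

lemma vEmp_sub_vEmp {d N : ℕ} (f : EuclideanSpace ℝ (Fin d) → EuclideanSpace ℝ (Fin d))
    (u : EuclideanSpace ℝ (Fin d) → Measure (EuclideanSpace ℝ (Fin d)) →
      EuclideanSpace ℝ (Fin d))
    (x x' : EuclideanSpace ℝ (Fin d)) (a a' : Fin N → EuclideanSpace ℝ (Fin d)) :
    vEmp f u x a - vEmp f u x' a' =
      (u x (empMeas a) - u x (empMeas a')) + (u x (empMeas a') - u x' (empMeas a'))
        + (N : ℝ)⁻¹ • ∑ j, (f (x - a j) - f (x' - a' j)) := by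
  simp only [vEmp, Finset.sum_sub_distrib, smul_sub]
  abel

section Norms

variable {E F : Type*} [SeminormedAddCommGroup E] [SeminormedAddCommGroup F]

lemma norm_add₃_sq_le (a b c : E) : ‖a + b + c‖ ^ 2 ≤ 3 * (‖a‖ ^ 2 + ‖b‖ ^ 2 + ‖c‖ ^ 2) := by
  have h := pow_le_pow_left₀ (norm_nonneg _) (norm_add₃_le (a := a) (b := b) (c := c)) 2
  nlinarith [sq_nonneg (‖a‖ - ‖b‖), sq_nonneg (‖a‖ - ‖c‖), sq_nonneg (‖b‖ - ‖c‖)]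

lemma norm_inv_card_smul_sum_sq_le [NormedSpace ℝ E] {ι : Type*} (s : Finset ι) (g : ι → E) :
    ‖(s.card : ℝ)⁻¹ • ∑ i ∈ s, g i‖ ^ 2 ≤ (s.card : ℝ)⁻¹ * ∑ i ∈ s, ‖g i‖ ^ 2 := by
  rcases s.eq_empty_or_nonempty with rfl | hs
  · simp
  have hcard : (0 : ℝ) < s.card := by exact_mod_cast hs.card_pos
  have hsum : ‖∑ i ∈ s, g i‖ ^ 2 ≤ s.card * ∑ i ∈ s, ‖g i‖ ^ 2 :=
    (pow_le_pow_left₀ (norm_nonneg _) (norm_sum_le _ _) 2).trans sq_sum_le_card_mul_sum_sq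
  rw [norm_smul, mul_pow, Real.norm_of_nonneg (by positivity)]
  calc ((s.card : ℝ)⁻¹) ^ 2 * ‖∑ i ∈ s, g i‖ ^ 2
      ≤ ((s.card : ℝ)⁻¹) ^ 2 * (s.card * ∑ i ∈ s, ‖g i‖ ^ 2) := by gcongr
    _ = (s.card : ℝ)⁻¹ * ∑ i ∈ s, ‖g i‖ ^ 2 := by field_simp

/-- The factor `3` comes from `(1 + p + p')² ≤ 3 (1 + p² + p'²)`. -/
lemma sq_norm_le_of_le_polyWeight {L q : ℝ} {y : F} {z z' : E}
    (h : ‖y‖ ≤ L * (1 + ‖z‖ ^ q + ‖z'‖ ^ q) * ‖z - z'‖) :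
    ‖y‖ ^ 2 ≤ 3 * L ^ 2 * ((1 + ‖z‖ ^ (2 * q) + ‖z'‖ ^ (2 * q)) * ‖z - z'‖ ^ 2) := by
  have hsq : ∀ w : E, ‖w‖ ^ (2 * q) = (‖w‖ ^ q) ^ 2 := fun w => by
    rw [mul_comm, ← Real.rpow_mul_natCast (norm_nonneg w)]; norm_num
  have hweight : (1 + ‖z‖ ^ q + ‖z'‖ ^ q) ^ 2 ≤ 3 * (1 + (‖z‖ ^ q) ^ 2 + (‖z'‖ ^ q) ^ 2) := by
    nlinarith [sq_nonneg (‖z‖ ^ q - ‖z'‖ ^ q), sq_nonneg (‖z‖ ^ q - 1),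
      sq_nonneg (‖z'‖ ^ q - 1)]
  rw [hsq, hsq]
  calc ‖y‖ ^ 2 ≤ (L * (1 + ‖z‖ ^ q + ‖z'‖ ^ q) * ‖z - z'‖) ^ 2 :=
        pow_le_pow_left₀ (norm_nonneg _) h 2
    _ = L ^ 2 * ((1 + ‖z‖ ^ q + ‖z'‖ ^ q) ^ 2 * ‖z - z'‖ ^ 2) := by ring
    _ ≤ L ^ 2 * (3 * (1 + (‖z‖ ^ q) ^ 2 + (‖z'‖ ^ q) ^ 2) * ‖z - z'‖ ^ 2) := by gcongr
    _ = _ := by ring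

end Norms

lemma add_add_mul_le_max_mul {a b c s t w : ℝ} (hs : 0 ≤ s) (ht : 0 ≤ t) (hw : 0 ≤ w) :
    a * s + b * t + c * w ≤ max (max a b) c * (s + t + w) := by
  have ha : a ≤ max (max a b) c := le_max_of_le_left (le_max_left _ _)
  have hb : b ≤ max (max a b) c := le_max_of_le_left (le_max_right _ _)
  have hc : c ≤ max (max a b) c := le_max_right _ _
  nlinarith [mul_le_mul_of_nonneg_right ha hs, mul_le_mul_of_nonneg_right hb ht,
    mul_le_mul_of_nonneg_right hc hw]

theorem vEmp_local_lipschitz_bound_general (d : ℕ)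
    (f : EuclideanSpace ℝ (Fin d) → EuclideanSpace ℝ (Fin d))
    (u : EuclideanSpace ℝ (Fin d) → Measure (EuclideanSpace ℝ (Fin d)) →
      EuclideanSpace ℝ (Fin d))
    (Lfh Luh q : ℝ)
    (Lut : ℝ)
    (hfloc : ∀ z z' : EuclideanSpace ℝ (Fin d),
      ‖f z - f z'‖ ≤ Lfh * (1 + ‖z‖ ^ q + ‖z'‖ ^ q) * ‖z - z'‖)
    (huloc : ∀ μ : Measure (EuclideanSpace ℝ (Fin d)), IsProbabilityMeasure μ →
      ∀ x x' : EuclideanSpace ℝ (Fin d),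
        ‖u x μ - u x' μ‖ ≤ Luh * (1 + ‖x‖ ^ q + ‖x'‖ ^ q) * ‖x - x'‖)
    (huemp : ∀ (N : ℕ) (x : EuclideanSpace ℝ (Fin d))
        (a b : Fin N → EuclideanSpace ℝ (Fin d)),
      ‖u x (empMeas a) - u x (empMeas b)‖ ^ 2 ≤ Lut / N * ∑ j, ‖a j - b j‖ ^ 2) :
    ∀ (N : ℕ), 1 ≤ N →
      ∀ (x x' : EuclideanSpace ℝ (Fin d)) (a a' : Fin N → EuclideanSpace ℝ (Fin d)),
        ‖vEmp f u x a - vEmp f u x' a'‖ ^ 2 ≤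
          max (max (9 * Luh ^ 2) (3 * Lut)) (9 * Lfh ^ 2) *
            ((1 + ‖x‖ ^ (2 * q) + ‖x'‖ ^ (2 * q)) * ‖x - x'‖ ^ 2
              + (N : ℝ)⁻¹ * ∑ j, ‖a j - a' j‖ ^ 2
              + (N : ℝ)⁻¹ * ∑ j,
                  (1 + ‖x - a j‖ ^ (2 * q) + ‖x' - a' j‖ ^ (2 * q))
                    * ‖(x - a j) - (x' - a' j)‖ ^ 2) := by
  intro N hN x x' a a'
  have hμ := isProbabilityMeasure_empMeas (Nat.one_le_iff_ne_zero.mp hN) a'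
  have hmeas := huemp N x a a'
  have hpoint := sq_norm_le_of_le_polyWeight (huloc _ hμ x x')
  have hinter : ‖(N : ℝ)⁻¹ • ∑ j, (f (x - a j) - f (x' - a' j))‖ ^ 2 ≤
      3 * Lfh ^ 2 * ((N : ℝ)⁻¹ * ∑ j, (1 + ‖x - a j‖ ^ (2 * q) + ‖x' - a' j‖ ^ (2 * q))
        * ‖(x - a j) - (x' - a' j)‖ ^ 2) := by
    have hjensen := norm_inv_card_smul_sum_sq_le Finset.univ
      fun j => f (x - a j) - f (x' - a' j)
    simp only [Finset.card_univ, Fintype.card_fin] at hjensen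
    refine hjensen.trans ?_
    rw [mul_left_comm, Finset.mul_sum (a := 3 * Lfh ^ 2)]
    gcongr with j
    exact sq_norm_le_of_le_polyWeight (hfloc _ _)
  rw [vEmp_sub_vEmp]
  refine (norm_add₃_sq_le _ _ _).trans ?_
  refine le_trans ?_ (add_add_mul_le_max_mul (by positivity) (by positivity) (by positivity))
  rw [div_eq_mul_inv, mul_assoc] at hmeas
  linarith

/-- Local Lipschitz bound for the interaction drift along empirical
measures with the explicit constant `C = max{9L̂_u², 3L_ũ, 9L̂_f²}`. -/
theorem vEmp_local_lipschitz_bound (d : ℕ) (hd : 1 ≤ d)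
    (f : EuclideanSpace ℝ (Fin d) → EuclideanSpace ℝ (Fin d))
    (u : EuclideanSpace ℝ (Fin d) → Measure (EuclideanSpace ℝ (Fin d)) →
      EuclideanSpace ℝ (Fin d))
    (Lfh Luh q : ℝ) (hLfh : 0 < Lfh) (hLuh : 0 < Luh) (hq : 0 < q)
    (Lut : ℝ) (hLut : 0 ≤ Lut)
    (hfloc : ∀ z z' : EuclideanSpace ℝ (Fin d),
      ‖f z - f z'‖ ≤ Lfh * (1 + ‖z‖ ^ q + ‖z'‖ ^ q) * ‖z - z'‖)
    (huloc : ∀ μ : Measure (EuclideanSpace ℝ (Fin d)), IsProbabilityMeasure μ →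
      ∀ x x' : EuclideanSpace ℝ (Fin d),
        ‖u x μ - u x' μ‖ ≤ Luh * (1 + ‖x‖ ^ q + ‖x'‖ ^ q) * ‖x - x'‖)
    (huemp : ∀ (N : ℕ) (x : EuclideanSpace ℝ (Fin d))
        (a b : Fin N → EuclideanSpace ℝ (Fin d)),
      ‖u x (empMeas a) - u x (empMeas b)‖ ^ 2 ≤ Lut / N * ∑ j, ‖a j - b j‖ ^ 2) :
    ∀ (N : ℕ), 1 ≤ N →
      ∀ (x x' : EuclideanSpace ℝ (Fin d)) (a a' : Fin N → EuclideanSpace ℝ (Fin d)),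
        ‖vEmp f u x a - vEmp f u x' a'‖ ^ 2 ≤
          max (max (9 * Luh ^ 2) (3 * Lut)) (9 * Lfh ^ 2) *
            ((1 + ‖x‖ ^ (2 * q) + ‖x'‖ ^ (2 * q)) * ‖x - x'‖ ^ 2
              + (N : ℝ)⁻¹ * ∑ j, ‖a j - a' j‖ ^ 2
              + (N : ℝ)⁻¹ * ∑ j,
                  (1 + ‖x - a j‖ ^ (2 * q) + ‖x' - a' j‖ ^ (2 * q))
                    * ‖(x - a j) - (x' - a' j)‖ ^ 2) :=
  vEmp_local_lipschitz_bound_general d f u Lfh Luh q Lut hfloc huloc huemp
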